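/- Let H = H_A ⊗ H_B ⊗ H_C be a tensor product of finite-dimensional Hilbert spaces and T ⊆ H a subspace. If S₁ ⊆ H_A is δ₁-viable for T and S₂ ⊆ H_B is δ₂-viable for T, then S₁ ⊗ S₂ ⊆ H_A ⊗ H_B is (δ₁+δ₂)-viable for T. -/

import Mathlib

noncomputable section

variable {a b c : ℕ}

/-- The orthogonal projection onto a submodule, as a continuous linear map `E →L[ℂ] E`. -/
def projCLM {E : Type*} [NormedAddCommGroup E] [InnerProductSpace ℂ E] [FiniteDimensional ℂ E]
    (K : Submodule ℂ E) : E →L[ℂ] E :=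
  K.subtypeL.comp (K.orthogonalProjection)

/-- `S ⊆ H_A` (here, a subspace of the whole space) is `δ`-viable for `T` if
`P_T P_{S_ext} P_T ≥ (1-δ) P_T`, where `S_ext` is the extension of `S` to the whole space. -/
def IsViable {E : Type*} [NormedAddCommGroup E] [InnerProductSpace ℂ E] [FiniteDimensional ℂ E]
    (δ : ℝ) (T Sext : Submodule ℂ E) : Prop :=
  ((projCLM T).comp ((projCLM Sext).comp (projCLM T))
      - ((1 - δ : ℝ) : ℂ) • projCLM T).IsPositive

/-- The linear map sending `f : H_A ⊗ H_B ⊗ H_C` (realized as functions on a product index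
set) to its `A`-slice at fixed indices `(j, k)`. -/
def sliceA (j : Fin b) (k : Fin c) :
    EuclideanSpace ℂ (Fin a × Fin b × Fin c) →ₗ[ℂ] EuclideanSpace ℂ (Fin a) where
  toFun f := WithLp.toLp 2 (fun i => f (i, j, k))
  map_add' _ _ := rfl
  map_smul' _ _ := rfl

/-- The linear map sending `f` to its `B`-slice at fixed indices `(i, k)`. -/
def sliceB (i : Fin a) (k : Fin c) :
    EuclideanSpace ℂ (Fin a × Fin b × Fin c) →ₗ[ℂ] EuclideanSpace ℂ (Fin b) where
  toFun f := WithLp.toLp 2 (fun j => f (i, j, k))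
  map_add' _ _ := rfl
  map_smul' _ _ := rfl

/-- The subspace `S₁ ⊗ H_B ⊗ H_C` of `H_A ⊗ H_B ⊗ H_C`: all vectors each of whose
`A`-slices lies in `S₁`. -/
def extA (S₁ : Submodule ℂ (EuclideanSpace ℂ (Fin a))) :
    Submodule ℂ (EuclideanSpace ℂ (Fin a × Fin b × Fin c)) :=
  ⨅ (j : Fin b), ⨅ (k : Fin c), S₁.comap (sliceA j k)

/-- The subspace `H_A ⊗ S₂ ⊗ H_C` of `H_A ⊗ H_B ⊗ H_C`. -/
def extB (S₂ : Submodule ℂ (EuclideanSpace ℂ (Fin b))) :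
    Submodule ℂ (EuclideanSpace ℂ (Fin a × Fin b × Fin c)) :=
  ⨅ (i : Fin a), ⨅ (k : Fin c), S₂.comap (sliceB i k)

/-! Since `S₁` and `S₂` act on different tensor factors, the projections `P₁`, `P₂` onto
their extensions commute. Hence `P₁ P₂` is the projection onto the intersection, and
`P₁ P₂ - (P₁ + P₂ - 1) = (1 - P₁)(1 - P₂)` is a projection, hence positive. Conjugating
by `P_T`, `P_T P₁ P₂ P_T ≥ P_T P₁ P_T + P_T P₂ P_T - P_T ≥ (1 - δ₁ - δ₂) P_T`. -/

theorem IsStarProjection.add_sub_one_le_mul {R : Type*} [Ring R] [PartialOrder R] [StarRing R]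
    [StarOrderedRing R] {p q : R} (hp : IsStarProjection p) (hq : IsStarProjection q)
    (hpq : Commute p q) : p + q - 1 ≤ p * q := by
  have h : p * q - (p + q - 1) = (1 - p) * (1 - q) := by noncomm_ring
  rw [← sub_nonneg, h]
  exact (hp.one_sub.mul hq.one_sub
    ((Commute.one_left _).sub_left ((Commute.one_right p).sub_right hpq))).nonneg

section Viability

variable {E : Type*} [NormedAddCommGroup E] [InnerProductSpace ℂ E] [FiniteDimensional ℂ E]

lemma isViable_iff_smul_le {δ : ℝ} {T S : Submodule ℂ E} :
    IsViable δ T S ↔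
      ((1 - δ : ℝ) : ℂ) • T.starProjection ≤
        T.starProjection * S.starProjection * T.starProjection := by
  rw [mul_assoc]
  exact Iff.rfl

lemma starProjection_inf_of_commute {U V : Submodule ℂ E}
    (hUV : Commute U.starProjection V.starProjection) :
    (U ⊓ V).starProjection = U.starProjection * V.starProjection := by
  ext x
  refine Submodule.eq_starProjection_of_mem_of_inner_eq_zero ⟨?_, ?_⟩ fun w hw => ?_
  · exact U.starProjection_apply_mem _
  · rw [hUV.eq]
    exact V.starProjection_apply_mem _
  · rw [mul_apply_eq_comp, inner_sub_left, U.inner_starProjection_left_eq_right,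
      V.inner_starProjection_left_eq_right, U.starProjection_eq_self_iff.mpr hw.1,
      V.starProjection_eq_self_iff.mpr hw.2, sub_self]

theorem IsViable.inf_of_commute {δ₁ δ₂ : ℝ} {T U V : Submodule ℂ E}
    (hU : IsViable δ₁ T U) (hV : IsViable δ₂ T V)
    (hUV : Commute U.starProjection V.starProjection) : IsViable (δ₁ + δ₂) T (U ⊓ V) := by
  rw [isViable_iff_smul_le] at *
  set p := T.starProjection
  have hp : IsStarProjection p := isStarProjection_starProjection
  calc ((1 - (δ₁ + δ₂) : ℝ) : ℂ) • p
        = ((1 - δ₁ : ℝ) : ℂ) • p + ((1 - δ₂ : ℝ) : ℂ) • p - p * 1 * p := by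
          rw [mul_one, hp.isIdempotentElem.eq]
          push_cast
          module
    _ ≤ p * U.starProjection * p + p * V.starProjection * p - p * 1 * p := by gcongr
    _ = p * (U.starProjection + V.starProjection - 1) * p := by noncomm_ring
    _ ≤ p * (U.starProjection * V.starProjection) * p :=
        hp.isSelfAdjoint.conjugate_le_conjugate
          (isStarProjection_starProjection.add_sub_one_le_mul isStarProjection_starProjection hUV)
    _ = p * (U ⊓ V).starProjection * p := by rw [starProjection_inf_of_commute hUV]

end Viability

section Slices

open scoped InnerProductSpace

lemma sliceA_apply (x : EuclideanSpace ℂ (Fin a × Fin b × Fin c)) (i : Fin a) (j : Fin b)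
    (k : Fin c) : sliceA j k x i = x (i, j, k) := rfl

lemma sliceB_apply (x : EuclideanSpace ℂ (Fin a × Fin b × Fin c)) (i : Fin a) (j : Fin b)
    (k : Fin c) : sliceB i k x j = x (i, j, k) := rfl

def pureTensor (u : EuclideanSpace ℂ (Fin a)) (v : EuclideanSpace ℂ (Fin b))
    (w : EuclideanSpace ℂ (Fin c)) : EuclideanSpace ℂ (Fin a × Fin b × Fin c) :=
  WithLp.toLp 2 fun p => u p.1 * v p.2.1 * w p.2.2

lemma sliceA_pureTensor (u : EuclideanSpace ℂ (Fin a)) (v : EuclideanSpace ℂ (Fin b))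
    (w : EuclideanSpace ℂ (Fin c)) (j : Fin b) (k : Fin c) :
    sliceA j k (pureTensor u v w) = (v j * w k) • u := by
  ext i
  simp only [sliceA_apply, pureTensor, PiLp.smul_apply, smul_eq_mul]
  ring

lemma sliceB_pureTensor (u : EuclideanSpace ℂ (Fin a)) (v : EuclideanSpace ℂ (Fin b))
    (w : EuclideanSpace ℂ (Fin c)) (i : Fin a) (k : Fin c) :
    sliceB i k (pureTensor u v w) = (u i * w k) • v := by
  ext j
  simp only [sliceB_apply, pureTensor, PiLp.smul_apply, smul_eq_mul]
  ring

lemma single_eq_pureTensor (i : Fin a) (j : Fin b) (k : Fin c) :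
    EuclideanSpace.single (i, j, k) (1 : ℂ) =
      pureTensor (EuclideanSpace.single i 1) (EuclideanSpace.single j 1)
        (EuclideanSpace.single k 1) := by
  ext ⟨i', j', k'⟩
  simp only [pureTensor, PiLp.single_apply, Prod.ext_iff, mul_ite, mul_one, mul_zero]
  split_ifs <;> simp_all

lemma inner_eq_sum_inner_sliceA (x y : EuclideanSpace ℂ (Fin a × Fin b × Fin c)) :
    ⟪x, y⟫_ℂ = ∑ j, ∑ k, ⟪sliceA j k x, sliceA j k y⟫_ℂ := by
  simp only [PiLp.inner_apply, Fintype.sum_prod_type, sliceA_apply]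
  rw [Finset.sum_comm]
  exact Finset.sum_congr rfl fun j _ => Finset.sum_comm

lemma inner_eq_sum_inner_sliceB (x y : EuclideanSpace ℂ (Fin a × Fin b × Fin c)) :
    ⟪x, y⟫_ℂ = ∑ i, ∑ k, ⟪sliceB i k x, sliceB i k y⟫_ℂ := by
  simp only [PiLp.inner_apply, Fintype.sum_prod_type, sliceB_apply]
  exact Finset.sum_congr rfl fun i _ => Finset.sum_comm

lemma starProjection_extA_pureTensor (S₁ : Submodule ℂ (EuclideanSpace ℂ (Fin a)))
    (u : EuclideanSpace ℂ (Fin a)) (v : EuclideanSpace ℂ (Fin b))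
    (w : EuclideanSpace ℂ (Fin c)) :
    (extA S₁).starProjection (pureTensor u v w) = pureTensor (S₁.starProjection u) v w := by
  refine Submodule.eq_starProjection_of_mem_of_inner_eq_zero ?_ fun z hz => ?_
  · simp only [extA, Submodule.mem_iInf, Submodule.mem_comap, sliceA_pureTensor]
    exact fun j k => S₁.smul_mem _ (S₁.starProjection_apply_mem u)
  · simp only [extA, Submodule.mem_iInf, Submodule.mem_comap] at hz
    rw [inner_eq_sum_inner_sliceA]
    refine Finset.sum_eq_zero fun j _ => Finset.sum_eq_zero fun k _ => ?_
    rw [map_sub, sliceA_pureTensor, sliceA_pureTensor, ← smul_sub, inner_smul_left,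
      S₁.starProjection_inner_eq_zero u _ (hz j k), mul_zero]

lemma starProjection_extB_pureTensor (S₂ : Submodule ℂ (EuclideanSpace ℂ (Fin b)))
    (u : EuclideanSpace ℂ (Fin a)) (v : EuclideanSpace ℂ (Fin b))
    (w : EuclideanSpace ℂ (Fin c)) :
    (extB S₂).starProjection (pureTensor u v w) = pureTensor u (S₂.starProjection v) w := by
  refine Submodule.eq_starProjection_of_mem_of_inner_eq_zero ?_ fun z hz => ?_
  · simp only [extB, Submodule.mem_iInf, Submodule.mem_comap, sliceB_pureTensor]
    exact fun i k => S₂.smul_mem _ (S₂.starProjection_apply_mem v)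
  · simp only [extB, Submodule.mem_iInf, Submodule.mem_comap] at hz
    rw [inner_eq_sum_inner_sliceB]
    refine Finset.sum_eq_zero fun i _ => Finset.sum_eq_zero fun k _ => ?_
    rw [map_sub, sliceB_pureTensor, sliceB_pureTensor, ← smul_sub, inner_smul_left,
      S₂.starProjection_inner_eq_zero v _ (hz i k), mul_zero]

lemma commute_starProjection_extA_extB (S₁ : Submodule ℂ (EuclideanSpace ℂ (Fin a)))
    (S₂ : Submodule ℂ (EuclideanSpace ℂ (Fin b))) :
    Commute (extA (b := b) (c := c) S₁).starProjection (extB S₂).starProjection := by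
  refine ContinuousLinearMap.coe_inj.mp <| (EuclideanSpace.basisFun _ ℂ).toBasis.ext
    fun ⟨i, j, k⟩ => ?_
  -- both sides send `eᵢ ⊗ eⱼ ⊗ eₖ` to `P₁eᵢ ⊗ P₂eⱼ ⊗ eₖ`
  simp [single_eq_pureTensor, starProjection_extA_pureTensor,
    starProjection_extB_pureTensor]

end Slices

/-- **Tensoring viable sets.** If `S₁ ⊆ H_A` is `δ₁`-viable for `T` and `S₂ ⊆ H_B` is
`δ₂`-viable for `T`, then `S₁ ⊗ S₂` (whose extension is `(S₁ ⊗ H_B ⊗ H_C) ⊓ (H_A ⊗ S₂ ⊗ H_C)`)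
is `(δ₁ + δ₂)`-viable for `T`. -/
theorem isViable_tensor (T : Submodule ℂ (EuclideanSpace ℂ (Fin a × Fin b × Fin c)))
    (S₁ : Submodule ℂ (EuclideanSpace ℂ (Fin a)))
    (S₂ : Submodule ℂ (EuclideanSpace ℂ (Fin b)))
    (δ₁ δ₂ : ℝ)
    (h₁ : IsViable δ₁ T (extA S₁)) (h₂ : IsViable δ₂ T (extB S₂)) :
    IsViable (δ₁ + δ₂) T (extA S₁ ⊓ extB S₂) :=
  h₁.inf_of_commute h₂ (commute_starProjection_extA_extB S₁ S₂)
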